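/- Suppose a sequence (θ_k) in ℝ^n and a function F = ψ_d + ψ_e satisfy: (i) ψ_d is L-smooth; (ii) for each k, (θ_k − θ_{k+1})ᵀ∇ψ_d(θ_k) ≥ (α/β)‖θ_{k+1} − θ_k‖² + ψ_e(θ_{k+1}) − ψ_e(θ_k) with step size 0 < β < 2α/L; (iii) F is bounded below. Then F(θ_{k+1}) ≤ F(θ_k) − (α/β − L/2)‖θ_{k+1} − θ_k‖² for all k, and consequently ‖θ_{k+1} − θ_k‖ → 0 as k → ∞. -/

import Mathlib

/-!
Restricted to the segment from `x` to `y`, an `L`-Lipschitz gradient gives the descent lemma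
`ψd y ≤ ψd x + ⟪∇ψd x, y - x⟫ + L/2 ‖y - x‖²`; adding the step inequality yields the sufficient
decrease of `F` with the coefficient `α/β - L/2`, which is positive for `β < 2α/L`. A decreasing
sequence bounded below has summable decrements, so `‖θ (k+1) - θ k‖² → 0`.
-/

open RealInnerProductSpace Filter Topology Set

section Smooth

variable {E : Type*} [NormedAddCommGroup E] [InnerProductSpace ℝ E] [CompleteSpace E]

theorem hasDerivAt_comp_add_smul {f : E → ℝ} (hf : Differentiable ℝ f) (x d : E) (t : ℝ) :
    HasDerivAt (fun t : ℝ => f (x + t • d)) ⟪gradient f (x + t • d), d⟫ t := by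
  have hline : HasDerivAt (fun t : ℝ => x + t • d) d t := by
    simpa using ((hasDerivAt_id t).smul_const d).const_add x
  simpa [Function.comp_def, inner_gradient_left] using
    (hf (x + t • d)).hasFDerivAt.comp_hasDerivAt t hline

theorem le_add_inner_gradient_add_sq_of_lipschitz_gradient {f : E → ℝ} {L : ℝ}
    (hf : Differentiable ℝ f) (hlip : ∀ x y, ‖gradient f x - gradient f y‖ ≤ L * ‖x - y‖)
    (x y : E) : f y ≤ f x + ⟪gradient f x, y - x⟫ + L / 2 * ‖y - x‖ ^ 2 := by
  set d := y - x
  -- `g` is antitone on `[0, 1]`; comparing `g 1 ≤ g 0` is the claim.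
  set g : ℝ → ℝ := fun t => f (x + t • d) - t * ⟪gradient f x, d⟫ - L / 2 * t ^ 2 * ‖d‖ ^ 2
  have hg : ∀ t, HasDerivAt g (⟪gradient f (x + t • d) - gradient f x, d⟫ - L * t * ‖d‖ ^ 2) t := by
    intro t
    refine (((hasDerivAt_comp_add_smul hf x d t).sub
      ((hasDerivAt_id t).mul_const ⟪gradient f x, d⟫)).sub
      (((hasDerivAt_pow 2 t).const_mul (L / 2)).mul_const (‖d‖ ^ 2))).congr_deriv ?_
    rw [inner_sub_left]
    ring
  have hg_nonpos : ∀ t ∈ interior (Icc (0 : ℝ) 1), deriv g t ≤ 0 := by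
    intro t ht
    rw [interior_Icc] at ht
    rw [(hg t).deriv, sub_nonpos]
    calc ⟪gradient f (x + t • d) - gradient f x, d⟫
        ≤ ‖gradient f (x + t • d) - gradient f x‖ * ‖d‖ := real_inner_le_norm _ _
      _ ≤ L * ‖x + t • d - x‖ * ‖d‖ := by gcongr; exact hlip _ _
      _ = L * t * ‖d‖ ^ 2 := by
        rw [add_sub_cancel_left, norm_smul, Real.norm_of_nonneg ht.1.le]
        ring
  have hanti : AntitoneOn g (Icc 0 1) :=
    antitoneOn_of_deriv_nonpos (convex_Icc 0 1)
      (continuous_iff_continuousAt.2 fun t => (hg t).continuousAt).continuousOn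
      (fun t _ => (hg t).differentiableAt.differentiableWithinAt) hg_nonpos
  have hends := hanti (left_mem_Icc.mpr zero_le_one) (right_mem_Icc.mpr zero_le_one) zero_le_one
  simp only [g, d, one_smul, zero_smul, add_zero, add_sub_cancel] at hends
  linarith

theorem add_le_sub_mul_sq_of_inner_gradient_ge {f g : E → ℝ} {L c : ℝ}
    (hf : Differentiable ℝ f) (hlip : ∀ x y, ‖gradient f x - gradient f y‖ ≤ L * ‖x - y‖)
    {x y : E} (hstep : c * ‖y - x‖ ^ 2 + g y - g x ≤ ⟪x - y, gradient f x⟫) :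
    f y + g y ≤ f x + g x - (c - L / 2) * ‖y - x‖ ^ 2 := by
  have hdescent := le_add_inner_gradient_add_sq_of_lipschitz_gradient hf hlip x y
  rw [← neg_sub y x, inner_neg_left, real_inner_comm] at hstep
  linarith

end Smooth

theorem nonneg_of_norm_sub_le_mul_norm_sub {E F : Type*} [NormedAddCommGroup E] [Nontrivial E]
    [NormedAddCommGroup F] {g : E → F} {L : ℝ} (hg : ∀ x y, ‖g x - g y‖ ≤ L * ‖x - y‖) :
    0 ≤ L := by
  obtain ⟨x, y, hxy⟩ := exists_pair_ne E
  exact nonneg_of_mul_nonneg_left ((norm_nonneg _).trans (hg x y))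
    (norm_pos_iff.mpr (sub_ne_zero.mpr hxy))

theorem tendsto_zero_of_add_le_of_bddBelow {u a : ℕ → ℝ} (ha : ∀ k, 0 ≤ a k)
    (hu : ∀ k, u (k + 1) + a k ≤ u k) (hbdd : BddBelow (range u)) :
    Tendsto a atTop (𝓝 0) := by
  have hanti : Antitone u := antitone_nat_of_succ_le fun k => by linarith [ha k, hu k]
  have hlim := tendsto_atTop_ciInf hanti hbdd
  have hdecr : Tendsto (fun k => u k - u (k + 1)) atTop (𝓝 0) := by
    simpa using hlim.sub (hlim.comp (tendsto_add_atTop_nat 1))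
  exact squeeze_zero ha (fun k => by linarith [hu k]) hdecr

/-- Descent of `F = ψd + ψe` along the KL-proximal iterates and vanishing step sizes. -/
theorem stmt1 {n : ℕ} (ψd ψe : EuclideanSpace ℝ (Fin n) → ℝ)
    (θ : ℕ → EuclideanSpace ℝ (Fin n)) (L α β : ℝ)
    (hdiff : Differentiable ℝ ψd)
    (hlip : ∀ x y : EuclideanSpace ℝ (Fin n),
      ‖gradient ψd x - gradient ψd y‖ ≤ L * ‖x - y‖)
    (hβpos : 0 < β) (hβ : β < 2 * α / L)
    (hstep : ∀ k : ℕ,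
      ⟪θ k - θ (k + 1), gradient ψd (θ k)⟫ ≥
        α / β * ‖θ (k + 1) - θ k‖ ^ 2 + ψe (θ (k + 1)) - ψe (θ k))
    (hbdd : BddBelow (Set.range fun x => ψd x + ψe x)) :
    (∀ k : ℕ,
      ψd (θ (k + 1)) + ψe (θ (k + 1)) ≤
        ψd (θ k) + ψe (θ k) - (α / β - L / 2) * ‖θ (k + 1) - θ k‖ ^ 2) ∧
    Tendsto (fun k => ‖θ (k + 1) - θ k‖) atTop (nhds 0) := by
  have hdescent : ∀ k, ψd (θ (k + 1)) + ψe (θ (k + 1)) ≤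
      ψd (θ k) + ψe (θ k) - (α / β - L / 2) * ‖θ (k + 1) - θ k‖ ^ 2 := fun k =>
    add_le_sub_mul_sq_of_inner_gradient_ge hdiff hlip (hstep k)
  refine ⟨hdescent, ?_⟩
  -- On the zero space `hlip` puts no constraint on `L`, so `α / β - L / 2` need not be positive.
  rcases subsingleton_or_nontrivial (EuclideanSpace ℝ (Fin n)) with _ | _
  · have hconst : ∀ k, θ (k + 1) = θ k := fun k => Subsingleton.elim _ _
    simp [hconst]
  have hL : 0 < L := (nonneg_of_norm_sub_le_mul_norm_sub hlip).lt_of_ne <| by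
    rintro rfl
    rw [div_zero] at hβ
    linarith
  have hc : 0 < α / β - L / 2 := by
    rw [lt_div_iff₀ hL] at hβ
    rw [sub_pos, div_lt_div_iff₀ two_pos hβpos]
    linarith
  have hsq : Tendsto (fun k => (α / β - L / 2) * ‖θ (k + 1) - θ k‖ ^ 2) atTop (𝓝 0) :=
    tendsto_zero_of_add_le_of_bddBelow (u := fun k => ψd (θ k) + ψe (θ k))
      (fun k => by positivity) (fun k => by linarith [hdescent k])
      (hbdd.mono (range_comp_subset_range θ fun x => ψd x + ψe x))
  simpa [hc.ne', Real.sqrt_sq (norm_nonneg _)] using (hsq.const_mul (α / β - L / 2)⁻¹).sqrt
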